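/- The presented group G = ⟨a, b | a*b*a = b*a*b, a^2 = b*a^2*b⟩ is a finite group of order 48. -/
import Mathlib


/-- The two relators of the presentation
`⟨a, b | a*b*a = b*a*b, a^2 = b*a^2*b⟩`, as elements of the free group on
two generators `a = FreeGroup.of 0`, `b = FreeGroup.of 1`. -/
def binaryOctahedralRels : Set (FreeGroup (Fin 2)) :=
  { (FreeGroup.of 0 * FreeGroup.of 1 * FreeGroup.of 0) *
      (FreeGroup.of 1 * FreeGroup.of 0 * FreeGroup.of 1)⁻¹,
    (FreeGroup.of 0) ^ 2 * (FreeGroup.of 1 * (FreeGroup.of 0) ^ 2 * FreeGroup.of 1)⁻¹ }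

namespace BOhelp

abbrev G := PresentedGroup binaryOctahedralRels

def π : FreeGroup (Fin 2) →* G := QuotientGroup.mk' _

def a : G := PresentedGroup.of 0
def b : G := PresentedGroup.of 1

lemma rel_one {r : FreeGroup (Fin 2)} (hr : r ∈ binaryOctahedralRels) : π r = 1 :=
  (QuotientGroup.eq_one_iff r).mpr (Subgroup.subset_normalClosure hr)

lemma adef : a = PresentedGroup.of 0 := rfl
lemma bdef : b = PresentedGroup.of 1 := rfl

lemma ha : π (FreeGroup.of 0) = a := rfl
lemma hb : π (FreeGroup.of 1) = b := rfl

lemma h1 : a * b * a = b * a * b := by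
  have m := rel_one (Set.mem_insert _ _)
  simp only [map_mul, map_inv, map_pow, ha, hb, mul_inv_eq_one] at m
  exact m

lemma h2 : a ^ 2 = b * a ^ 2 * b := by
  have m := rel_one (Set.mem_insert_of_mem _ rfl)
  simp only [map_mul, map_inv, map_pow, ha, hb, mul_inv_eq_one] at m
  exact m



lemma h2' : a * a = b * (a * a) * b := by
  have := h2; rw [pow_two] at this; exact this

def f : Fin 2 → G
  | 0 => a
  | 1 => b

lemma f0 : f 0 = a := rfl
lemma f1 : f 1 = b := rfl

def w (l : List (Fin 2)) : G := (l.map f).prod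

lemma wcons (x : Fin 2) (l : List (Fin 2)) : w (x :: l) = f x * w l := by simp [w]

lemma wapp (p q : List (Fin 2)) : w (p ++ q) = w p * w q := by
  simp [w]

lemma step (p q : List (Fin 2)) {x y : List (Fin 2)} (h : w x = w y) :
    w (p ++ x ++ q) = w (p ++ y ++ q) := by
  simp only [wapp, h]

lemma wnil : w [] = 1 := rfl
lemma wA (p : List (Fin 2)) : w (p ++ [0]) = w p * a := by
  rw [wapp]; simp [w, f]
lemma wB (p : List (Fin 2)) : w (p ++ [1]) = w p * b := by
  rw [wapp]; simp [w, f]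

lemma rel1 : w [0,1,0] = w [1,0,1] := by
  simp only [w, List.map_cons, List.map_nil, List.prod_cons, List.prod_nil, mul_one, f,
    ← mul_assoc]
  exact h1

lemma rel2 : w [0,0] = w [1,0,0,1] := by
  simp only [w, List.map_cons, List.map_nil, List.prod_cons, List.prod_nil, mul_one, f,
    ← mul_assoc]
  calc a * a = b * (a * a) * b := h2'
    _ = b * a * a * b := by group

lemma e1 : b⁻¹ * (a * a) * b⁻¹ = a * a := by
  conv_lhs => rw [h2']
  group

lemma l1 : a * a * b = b⁻¹ * (a * a) := by
  conv_lhs => rw [← e1]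
  group

def D : G := a * b * a

lemma da : D * a = b * D := by
  calc D * a = b * a * b * a := by rw [D, h1]
    _ = b * D := by rw [D]; group

lemma db : D * b = a * D := by
  calc D * b = a * (b * a * b) := by rw [D]; group
    _ = a * D := by rw [← h1, D]

lemma dA2 : D * (a * a) = b * b * D := by
  have s1 : D * (a * a) = D * a * a := by group
  have s2 : D * a * a = b * D * a := congrArg (· * a) da
  have s3 : b * D * a = b * (D * a) := by group
  have s4 : b * (D * a) = b * (b * D) := congrArg (b * ·) da
  have s5 : b * (b * D) = b * b * D := by group
  exact ((((s1.trans s2).trans s3).trans s4).trans s5)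

lemma l3 : b * b = a * (b * b) * a := by
  have t : D * (a * a) = D * (b * (a * a) * b) := congrArg (D * ·) h2'
  have t2 : D * (b * (a * a) * b) = a * (b * b) * a * D := by
    have s1 : D * (b * (a * a) * b) = D * b * (a * a) * b := by group
    have s2 : D * b * (a * a) * b = a * D * (a * a) * b :=
      congrArg (fun x => x * (a * a) * b) db
    have s3 : a * D * (a * a) * b = a * (D * (a * a)) * b := by group
    have s4 : a * (D * (a * a)) * b = a * (b * b * D) * b :=
      congrArg (fun x => a * x * b) dA2
    have s5 : a * (b * b * D) * b = a * (b * b) * (D * b) := by group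
    have s6 : a * (b * b) * (D * b) = a * (b * b) * (a * D) :=
      congrArg (a * (b * b) * ·) db
    have s7 : a * (b * b) * (a * D) = a * (b * b) * a * D := by group
    exact (((((s1.trans s2).trans s3).trans s4).trans s5).trans s6).trans s7
  have t3 : b * b * D = a * (b * b) * a * D := dA2.symm.trans (t.trans t2)
  exact mul_right_cancel t3

lemma rel3 : w [1,1] = w [0,1,1,0] := by
  simp only [w, List.map_cons, List.map_nil, List.prod_cons, List.prod_nil, mul_one, f,
    ← mul_assoc]
  calc b * b = a * (b * b) * a := l3
    _ = a * b * b * a := by group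



lemma rel5 : w [0,0,0,0] = w [1,1,1,1] := by
  calc w [0,0,0,0] = w [1,0,0,1,0,0] := step [] [0,0] rel2
    _ = w [1,0,1,0,1,0] := step [1,0] [0] rel1
    _ = w [1,1,0,1,1,0] := step [1] [1,0] rel1
    _ = w [1,1,1,1] := step [1,1] [] rel3.symm

lemma m5 : a * (a * (a * a)) = b * (b * (b * b)) := by
  have := rel5
  simp only [w, List.map_cons, List.map_nil, List.prod_cons, List.prod_nil, mul_one, f] at this
  exact this

lemma q4 : a * a * (b * (b * (b * b))) = b⁻¹ * (b⁻¹ * (b⁻¹ * b⁻¹)) * (a * a) := by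
  have s1 : a * a * (b * (b * (b * b))) = a * a * b * (b * (b * b)) := by group
  have s2 : a * a * b * (b * (b * b)) = b⁻¹ * (a * a) * (b * (b * b)) :=
    congrArg (· * (b * (b * b))) l1
  have s3 : b⁻¹ * (a * a) * (b * (b * b)) = b⁻¹ * (a * a * b * (b * b)) := by group
  have s4 : b⁻¹ * (a * a * b * (b * b)) = b⁻¹ * (b⁻¹ * (a * a) * (b * b)) :=
    congrArg (fun x => b⁻¹ * (x * (b * b))) l1
  have s5 : b⁻¹ * (b⁻¹ * (a * a) * (b * b)) = b⁻¹ * (b⁻¹ * (a * a * b * b)) := by group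
  have s6 : b⁻¹ * (b⁻¹ * (a * a * b * b)) = b⁻¹ * (b⁻¹ * (b⁻¹ * (a * a) * b)) :=
    congrArg (fun x => b⁻¹ * (b⁻¹ * (x * b))) l1
  have s7 : b⁻¹ * (b⁻¹ * (b⁻¹ * (a * a) * b)) = b⁻¹ * (b⁻¹ * (b⁻¹ * (a * a * b))) := by group
  have s8 : b⁻¹ * (b⁻¹ * (b⁻¹ * (a * a * b))) = b⁻¹ * (b⁻¹ * (b⁻¹ * (b⁻¹ * (a * a)))) :=
    congrArg (fun x => b⁻¹ * (b⁻¹ * (b⁻¹ * x))) l1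
  have s9 : b⁻¹ * (b⁻¹ * (b⁻¹ * (b⁻¹ * (a * a)))) = b⁻¹ * (b⁻¹ * (b⁻¹ * b⁻¹)) * (a * a) := by
    group
  exact ((((((((s1.trans s2).trans s3).trans s4).trans s5).trans s6).trans s7).trans s8).trans s9)

lemma c1 : a * a * (b * (b * (b * b))) = b * (b * (b * b)) * (a * a) := by
  have u1 : a * a * (b * (b * (b * b))) = a * a * (a * (a * (a * a))) :=
    congrArg (a * a * ·) m5.symm
  have u2 : a * a * (a * (a * (a * a))) = a * (a * (a * a)) * (a * a) := by group
  have u3 : a * (a * (a * a)) * (a * a) = b * (b * (b * b)) * (a * a) :=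
    congrArg (· * (a * a)) m5
  exact (u1.trans u2).trans u3

lemma hB4 : b * (b * (b * b)) = b⁻¹ * (b⁻¹ * (b⁻¹ * b⁻¹)) :=
  mul_right_cancel (c1.symm.trans q4)

lemma rel7 : w [1,1,1,1,1,1,1,1] = w [] := by
  simp only [w, List.map_cons, List.map_nil, List.prod_cons, List.prod_nil, mul_one, f]
  calc b * (b * (b * (b * (b * (b * (b * b))))))
      = b * (b * (b * b)) * (b * (b * (b * b))) := by group
    _ = b⁻¹ * (b⁻¹ * (b⁻¹ * b⁻¹)) * (b * (b * (b * b))) :=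
        congrArg (· * (b * (b * (b * b)))) hB4
    _ = 1 := by group

lemma rel6 : w [0,0,0,0,0,0,0,0] = w [] := by
  simp only [w, List.map_cons, List.map_nil, List.prod_cons, List.prod_nil, mul_one, f]
  calc a * (a * (a * (a * (a * (a * (a * a))))))
      = a * (a * (a * a)) * (a * (a * (a * a))) := by group
    _ = b * (b * (b * b)) * (a * (a * (a * a))) := congrArg (· * (a * (a * (a * a)))) m5
    _ = b * (b * (b * b)) * (b * (b * (b * b))) := congrArg (b * (b * (b * b)) * ·) m5
    _ = b⁻¹ * (b⁻¹ * (b⁻¹ * b⁻¹)) * (b * (b * (b * b))) :=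
        congrArg (· * (b * (b * (b * b)))) hB4
    _ = 1 := by group


attribute [irreducible] w f D


def wordsN : Nat → List (Fin 2)
  | 0 => []
  | 1 => [0]
  | 2 => [1]
  | 3 => [0,0]
  | 4 => [0,1]
  | 5 => [1,0]
  | 6 => [1,1]
  | 7 => [0,0,0]
  | 8 => [0,0,1]
  | 9 => [0,1,0]
  | 10 => [0,1,1]
  | 11 => [1,0,0]
  | 12 => [1,1,0]
  | 13 => [1,1,1]
  | 14 => [0,0,0,0]
  | 15 => [0,0,0,1]
  | 16 => [0,0,1,0]
  | 17 => [0,0,1,1]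
  | 18 => [0,1,0,0]
  | 19 => [0,1,1,1]
  | 20 => [1,0,0,0]
  | 21 => [1,1,0,0]
  | 22 => [1,1,1,0]
  | 23 => [0,0,0,0,0]
  | 24 => [0,0,0,0,1]
  | 25 => [0,0,0,1,0]
  | 26 => [0,0,0,1,1]
  | 27 => [0,0,1,1,1]
  | 28 => [0,1,0,0,0]
  | 29 => [0,1,1,1,0]
  | 30 => [1,0,0,0,1]
  | 31 => [1,1,0,0,0]
  | 32 => [1,1,1,0,0]
  | 33 => [0,0,0,0,0,0]
  | 34 => [0,0,0,0,0,1]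
  | 35 => [0,0,0,0,1,0]
  | 36 => [0,0,0,0,1,1]
  | 37 => [0,0,0,1,1,1]
  | 38 => [0,0,1,1,1,0]
  | 39 => [0,1,1,1,0,0]
  | 40 => [1,0,0,0,1,1]
  | 41 => [1,1,0,0,0,1]
  | 42 => [1,1,1,0,0,0]
  | 43 => [0,0,0,0,0,0,0]
  | 44 => [0,0,0,0,0,1,0]
  | 45 => [0,0,0,0,1,1,1]
  | 46 => [0,0,0,1,1,1,0]
  | 47 => [0,1,1,1,0,0,0]
  | _ => []

def S (i : Fin 48) : G := w (wordsN i.val)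

theorem E5b : w [1,0,1] = w [0,1,0] := by
  calc w [1,0,1] = w [0,1,0] := step [] [] rel1.symm

theorem E9b : w [0,1,0,1] = w [0,0,1,0] := by
  calc w [0,1,0,1] = w [0,0,1,0] := step [0] [] rel1.symm

theorem E10a : w [0,1,1,0] = w [1,1] := by
  calc w [0,1,1,0] = w [1,1] := step [] [] rel3.symm

theorem E11b : w [1,0,0,1] = w [0,0] := by
  calc w [1,0,0,1] = w [0,0] := step [] [] rel2.symm

theorem E12b : w [1,1,0,1] = w [0,1,0,0] := by
  calc w [1,1,0,1] = w [1,0,1,0] := step [1] [] rel1.symm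
    _ = w [0,1,0,0] := step [] [0] rel1.symm

theorem E13b : w [1,1,1,1] = w [0,0,0,0] := by
  calc w [1,1,1,1] = w [0,0,0,0] := step [] [] rel5.symm

theorem E16a : w [0,0,1,0,0] = w [1,1,1] := by
  calc w [0,0,1,0,0] = w [0,1,0,1,0] := step [0] [0] rel1
    _ = w [1,0,1,1,0] := step [] [1,0] rel1
    _ = w [1,1,1] := step [1] [] rel3.symm

theorem E16b : w [0,0,1,0,1] = w [0,0,0,1,0] := by
  calc w [0,0,1,0,1] = w [0,0,0,1,0] := step [0,0] [] rel1.symm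

theorem E17a : w [0,0,1,1,0] = w [0,1,1] := by
  calc w [0,0,1,1,0] = w [0,1,1] := step [0] [] rel3.symm

theorem E18b : w [0,1,0,0,1] = w [0,0,0] := by
  calc w [0,1,0,0,1] = w [0,0,0] := step [0] [] rel2.symm

theorem E19b : w [0,1,1,1,1] = w [0,0,0,0,0] := by
  calc w [0,1,1,1,1] = w [0,0,0,0,0] := step [0] [] rel5.symm

theorem E20a : w [1,0,0,0,0] = w [0,0,0,0,1] := by
  calc w [1,0,0,0,0] = w [1,0,0,1,0,0,1] := step [1,0,0] [] rel2
    _ = w [0,0,0,0,1] := step [] [0,0,1] rel2.symm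

theorem E21b : w [1,1,0,0,1] = w [1,0,0] := by
  calc w [1,1,0,0,1] = w [1,0,0] := step [1] [] rel2.symm

theorem E22b : w [1,1,1,0,1] = w [0,1,0,0,0] := by
  calc w [1,1,1,0,1] = w [1,1,0,1,0] := step [1,1] [] rel1.symm
    _ = w [1,0,1,0,0] := step [1] [0] rel1.symm
    _ = w [0,1,0,0,0] := step [] [0,0] rel1.symm

theorem E25a : w [0,0,0,1,0,0] = w [0,1,1,1] := by
  calc w [0,0,0,1,0,0] = w [0,0,1,0,1,0] := step [0,0] [0] rel1
    _ = w [0,1,0,1,1,0] := step [0] [1,0] rel1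
    _ = w [0,1,1,1] := step [0,1] [] rel3.symm

theorem E25b : w [0,0,0,1,0,1] = w [0,0,0,0,1,0] := by
  calc w [0,0,0,1,0,1] = w [0,0,0,0,1,0] := step [0,0,0] [] rel1.symm

theorem E26a : w [0,0,0,1,1,0] = w [0,0,1,1] := by
  calc w [0,0,0,1,1,0] = w [0,0,1,1] := step [0,0] [] rel3.symm

theorem E27b : w [0,0,1,1,1,1] = w [0,0,0,0,0,0] := by
  calc w [0,0,1,1,1,1] = w [0,0,0,0,0,0] := step [0,0] [] rel5.symm

theorem E28a : w [0,1,0,0,0,0] = w [0,0,0,0,0,1] := by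
  calc w [0,1,0,0,0,0] = w [0,1,0,0,1,0,0,1] := step [0,1,0,0] [] rel2
    _ = w [0,0,0,0,0,1] := step [0] [0,0,1] rel2.symm

theorem E28b : w [0,1,0,0,0,1] = w [1,0,0,0] := by
  calc w [0,1,0,0,0,1] = w [1,0,1,0,0,1] := step [] [0,0,1] rel1
    _ = w [1,0,0,0] := step [1,0] [] rel2.symm

theorem E29b : w [0,1,1,1,0,1] = w [1,1,1,0] := by
  calc w [0,1,1,1,0,1] = w [0,1,1,0,1,0] := step [0,1,1] [] rel1.symm
    _ = w [1,1,1,0] := step [] [1,0] rel3.symm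

theorem E30a : w [1,0,0,0,1,0] = w [0,0,0,1] := by
  calc w [1,0,0,0,1,0] = w [1,0,0,1,0,1] := step [1,0,0] [] rel1
    _ = w [0,0,0,1] := step [] [0,1] rel2.symm

theorem E31a : w [1,1,0,0,0,0] = w [0,0,0,0,1,1] := by
  calc w [1,1,0,0,0,0] = w [1,1,1,1,1,1] := step [1,1] [] rel5
    _ = w [0,0,0,0,1,1] := step [] [1,1] rel5.symm

theorem E32b : w [1,1,1,0,0,1] = w [1,1,0,0] := by
  calc w [1,1,1,0,0,1] = w [1,1,0,0] := step [1,1] [] rel2.symm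

theorem E33b : w [0,0,0,0,0,0,1] = w [1,1,1,0,0] := by
  calc w [0,0,0,0,0,0,1] = w [1,1,1,1,0,0,1] := step [] [0,0,1] rel5
    _ = w [1,1,1,0,0] := step [1,1,1] [] rel2.symm

theorem E34b : w [0,0,0,0,0,1,1] = w [1,1,0,0,0] := by
  calc w [0,0,0,0,0,1,1] = w [0,1,1,1,1,1,1] := step [0] [1,1] rel5
    _ = w [0,1,1,0,0,0,0] := step [0,1,1] [] rel5.symm
    _ = w [1,1,0,0,0] := step [] [0,0,0] rel3.symm

theorem E35a : w [0,0,0,0,1,0,0] = w [0,0,1,1,1] := by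
  calc w [0,0,0,0,1,0,0] = w [0,0,0,1,0,1,0] := step [0,0,0] [0] rel1
    _ = w [0,0,1,0,1,1,0] := step [0,0] [1,0] rel1
    _ = w [0,0,1,1,1] := step [0,0,1] [] rel3.symm

theorem E35b : w [0,0,0,0,1,0,1] = w [0,0,0,0,0,1,0] := by
  calc w [0,0,0,0,1,0,1] = w [0,0,0,0,0,1,0] := step [0,0,0,0] [] rel1.symm

theorem E36a : w [0,0,0,0,1,1,0] = w [0,0,0,1,1] := by
  calc w [0,0,0,0,1,1,0] = w [0,0,0,1,1] := step [0,0,0] [] rel3.symm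

theorem E37b : w [0,0,0,1,1,1,1] = w [0,0,0,0,0,0,0] := by
  calc w [0,0,0,1,1,1,1] = w [0,0,0,0,0,0,0] := step [0,0,0] [] rel5.symm

theorem E38a : w [0,0,1,1,1,0,0] = w [1] := by
  calc w [0,0,1,1,1,0,0] = w [1,0,0,1,1,1,1,0,0] := step [] [1,1,1,0,0] rel2
    _ = w [1,0,0,0,0,0,0,0,0] := step [1,0,0] [0,0] rel5.symm
    _ = w [1] := step [1] [] rel6

theorem E38b : w [0,0,1,1,1,0,1] = w [0,1,1,1,0] := by
  calc w [0,0,1,1,1,0,1] = w [0,0,1,1,0,1,0] := step [0,0,1,1] [] rel1.symm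
    _ = w [0,1,1,1,0] := step [0] [1,0] rel3.symm

theorem E39b : w [0,1,1,1,0,0,1] = w [1,1,0] := by
  calc w [0,1,1,1,0,0,1] = w [0,1,1,0,0] := step [0,1,1] [] rel2.symm
    _ = w [1,1,0] := step [] [0] rel3.symm

theorem E40a : w [1,0,0,0,1,1,0] = w [0,0,1] := by
  calc w [1,0,0,0,1,1,0] = w [1,0,0,1,1] := step [1,0,0] [] rel3.symm
    _ = w [0,0,1] := step [] [1] rel2.symm

theorem E40b : w [1,0,0,0,1,1,1] = w [0,0,0,1,1,1,0] := by
  calc w [1,0,0,0,1,1,1] = w [1,0,0,0,1,0,1,1,0] := step [1,0,0,0,1] [] rel3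
    _ = w [1,0,0,1,0,1,1,1,0] := step [1,0,0] [1,1,0] rel1
    _ = w [0,0,0,1,1,1,0] := step [] [0,1,1,1,0] rel2.symm

theorem E41a : w [1,1,0,0,0,1,0] = w [1,0,0,0,1] := by
  calc w [1,1,0,0,0,1,0] = w [1,1,0,0,1,0,1] := step [1,1,0,0] [] rel1
    _ = w [1,0,0,0,1] := step [1] [0,1] rel2.symm

theorem E41b : w [1,1,0,0,0,1,1] = w [0] := by
  calc w [1,1,0,0,0,1,1] = w [0,1,1,0,0,0,0,1,1] := step [] [0,0,0,1,1] rel3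
    _ = w [0,1,1,1,1,1,1,1,1] := step [0,1,1] [1,1] rel5
    _ = w [0] := step [0] [] rel7

theorem E42a : w [1,1,1,0,0,0,0] = w [0,0,0,0,1,1,1] := by
  calc w [1,1,1,0,0,0,0] = w [1,1,1,1,1,1,1] := step [1,1,1] [] rel5
    _ = w [0,0,0,0,1,1,1] := step [] [1,1,1] rel5.symm

theorem E42b : w [1,1,1,0,0,0,1] = w [0,1,1,1,0,0,0] := by
  calc w [1,1,1,0,0,0,1] = w [0,1,1,0,1,0,0,0,1] := step [] [1,0,0,0,1] rel3
    _ = w [0,1,1,1,0,1,0,0,1] := step [0,1,1] [0,0,1] rel1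
    _ = w [0,1,1,1,0,0,0] := step [0,1,1,1,0] [] rel2.symm

theorem E43a : w [0,0,0,0,0,0,0,0] = w [] := by
  calc w [0,0,0,0,0,0,0,0] = w [] := step [] [] rel6

theorem E43b : w [0,0,0,0,0,0,0,1] = w [0,1,1,1,0,0] := by
  calc w [0,0,0,0,0,0,0,1] = w [0,1,1,1,1,0,0,1] := step [0] [0,0,1] rel5
    _ = w [0,1,1,1,0,0] := step [0,1,1,1] [] rel2.symm

theorem E44a : w [0,0,0,0,0,1,0,0] = w [0,0,0,1,1,1] := by
  calc w [0,0,0,0,0,1,0,0] = w [0,0,0,0,1,0,1,0] := step [0,0,0,0] [0] rel1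
    _ = w [0,0,0,1,0,1,1,0] := step [0,0,0] [1,0] rel1
    _ = w [0,0,0,1,1,1] := step [0,0,0,1] [] rel3.symm

theorem E44b : w [0,0,0,0,0,1,0,1] = w [1,1,1,0,0,0] := by
  calc w [0,0,0,0,0,1,0,1] = w [0,0,0,0,0,0,1,0] := step [0,0,0,0,0] [] rel1.symm
    _ = w [1,1,1,1,0,0,1,0] := step [] [0,0,1,0] rel5
    _ = w [1,1,1,0,0,0] := step [1,1,1] [0] rel2.symm

theorem E45a : w [0,0,0,0,1,1,1,0] = w [1,0,0,0,1,1] := by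
  calc w [0,0,0,0,1,1,1,0] = w [1,0,0,1,0,0,1,1,1,0] := step [] [0,0,1,1,1,0] rel2
    _ = w [1,0,0,0,0,1,1,0] := step [1,0,0] [1,1,0] rel2.symm
    _ = w [1,0,0,0,1,1] := step [1,0,0,0] [] rel3.symm

theorem E45b : w [0,0,0,0,1,1,1,1] = w [] := by
  calc w [0,0,0,0,1,1,1,1] = w [1,1,1,1,1,1,1,1] := step [] [1,1,1,1] rel5
    _ = w [] := step [] [] rel7

theorem E46a : w [0,0,0,1,1,1,0,0] = w [0,1] := by
  calc w [0,0,0,1,1,1,0,0] = w [0,1,0,0,1,1,1,1,0,0] := step [0] [1,1,1,0,0] rel2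
    _ = w [0,1,0,0,0,0,0,0,0,0] := step [0,1,0,0] [0,0] rel5.symm
    _ = w [0,1] := step [0,1] [] rel6

theorem E46b : w [0,0,0,1,1,1,0,1] = w [0,0,1,1,1,0] := by
  calc w [0,0,0,1,1,1,0,1] = w [0,0,0,1,1,0,1,0] := step [0,0,0,1,1] [] rel1.symm
    _ = w [0,0,1,1,1,0] := step [0,0] [1,0] rel3.symm

theorem E47a : w [0,1,1,1,0,0,0,0] = w [1,1,0,0,0,1] := by
  calc w [0,1,1,1,0,0,0,0] = w [0,1,1,1,0,0,1,0,0,1] := step [0,1,1,1,0,0] [] rel2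
    _ = w [0,1,1,0,0,0,0,1] := step [0,1,1] [0,0,1] rel2.symm
    _ = w [1,1,0,0,0,1] := step [] [0,0,0,1] rel3.symm

theorem E47b : w [0,1,1,1,0,0,0,1] = w [1,0] := by
  calc w [0,1,1,1,0,0,0,1] = w [0,1,1,1,1,0,0,1,0,1] := step [0,1,1,1] [0,1] rel2
    _ = w [0,1,1,1,1,0,0,0,1,0] := step [0,1,1,1,1,0,0] [] rel1.symm
    _ = w [0,0,0,0,0,0,0,0,1,0] := step [0] [0,0,0,1,0] rel5.symm
    _ = w [1,0] := step [] [1,0] rel6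

theorem ta : ∀ i : Fin 48, ∃ j : Fin 48, S i * a = S j := by
  intro i
  fin_cases i
  · exact ⟨1, (wA []).symm⟩
  · exact ⟨3, (wA [0]).symm⟩
  · exact ⟨5, (wA [1]).symm⟩
  · exact ⟨7, (wA [0,0]).symm⟩
  · exact ⟨9, (wA [0,1]).symm⟩
  · exact ⟨11, (wA [1,0]).symm⟩
  · exact ⟨12, (wA [1,1]).symm⟩
  · exact ⟨14, (wA [0,0,0]).symm⟩
  · exact ⟨16, (wA [0,0,1]).symm⟩
  · exact ⟨18, (wA [0,1,0]).symm⟩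
  · exact ⟨6, (wA [0,1,1]).symm.trans E10a⟩
  · exact ⟨20, (wA [1,0,0]).symm⟩
  · exact ⟨21, (wA [1,1,0]).symm⟩
  · exact ⟨22, (wA [1,1,1]).symm⟩
  · exact ⟨23, (wA [0,0,0,0]).symm⟩
  · exact ⟨25, (wA [0,0,0,1]).symm⟩
  · exact ⟨13, (wA [0,0,1,0]).symm.trans E16a⟩
  · exact ⟨10, (wA [0,0,1,1]).symm.trans E17a⟩
  · exact ⟨28, (wA [0,1,0,0]).symm⟩
  · exact ⟨29, (wA [0,1,1,1]).symm⟩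
  · exact ⟨24, (wA [1,0,0,0]).symm.trans E20a⟩
  · exact ⟨31, (wA [1,1,0,0]).symm⟩
  · exact ⟨32, (wA [1,1,1,0]).symm⟩
  · exact ⟨33, (wA [0,0,0,0,0]).symm⟩
  · exact ⟨35, (wA [0,0,0,0,1]).symm⟩
  · exact ⟨19, (wA [0,0,0,1,0]).symm.trans E25a⟩
  · exact ⟨17, (wA [0,0,0,1,1]).symm.trans E26a⟩
  · exact ⟨38, (wA [0,0,1,1,1]).symm⟩
  · exact ⟨34, (wA [0,1,0,0,0]).symm.trans E28a⟩
  · exact ⟨39, (wA [0,1,1,1,0]).symm⟩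
  · exact ⟨15, (wA [1,0,0,0,1]).symm.trans E30a⟩
  · exact ⟨36, (wA [1,1,0,0,0]).symm.trans E31a⟩
  · exact ⟨42, (wA [1,1,1,0,0]).symm⟩
  · exact ⟨43, (wA [0,0,0,0,0,0]).symm⟩
  · exact ⟨44, (wA [0,0,0,0,0,1]).symm⟩
  · exact ⟨27, (wA [0,0,0,0,1,0]).symm.trans E35a⟩
  · exact ⟨26, (wA [0,0,0,0,1,1]).symm.trans E36a⟩
  · exact ⟨46, (wA [0,0,0,1,1,1]).symm⟩
  · exact ⟨2, (wA [0,0,1,1,1,0]).symm.trans E38a⟩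
  · exact ⟨47, (wA [0,1,1,1,0,0]).symm⟩
  · exact ⟨8, (wA [1,0,0,0,1,1]).symm.trans E40a⟩
  · exact ⟨30, (wA [1,1,0,0,0,1]).symm.trans E41a⟩
  · exact ⟨45, (wA [1,1,1,0,0,0]).symm.trans E42a⟩
  · exact ⟨0, (wA [0,0,0,0,0,0,0]).symm.trans E43a⟩
  · exact ⟨37, (wA [0,0,0,0,0,1,0]).symm.trans E44a⟩
  · exact ⟨40, (wA [0,0,0,0,1,1,1]).symm.trans E45a⟩
  · exact ⟨4, (wA [0,0,0,1,1,1,0]).symm.trans E46a⟩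
  · exact ⟨41, (wA [0,1,1,1,0,0,0]).symm.trans E47a⟩

theorem tb : ∀ i : Fin 48, ∃ j : Fin 48, S i * b = S j := by
  intro i
  fin_cases i
  · exact ⟨2, (wB []).symm⟩
  · exact ⟨4, (wB [0]).symm⟩
  · exact ⟨6, (wB [1]).symm⟩
  · exact ⟨8, (wB [0,0]).symm⟩
  · exact ⟨10, (wB [0,1]).symm⟩
  · exact ⟨9, (wB [1,0]).symm.trans E5b⟩
  · exact ⟨13, (wB [1,1]).symm⟩
  · exact ⟨15, (wB [0,0,0]).symm⟩
  · exact ⟨17, (wB [0,0,1]).symm⟩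
  · exact ⟨16, (wB [0,1,0]).symm.trans E9b⟩
  · exact ⟨19, (wB [0,1,1]).symm⟩
  · exact ⟨3, (wB [1,0,0]).symm.trans E11b⟩
  · exact ⟨18, (wB [1,1,0]).symm.trans E12b⟩
  · exact ⟨14, (wB [1,1,1]).symm.trans E13b⟩
  · exact ⟨24, (wB [0,0,0,0]).symm⟩
  · exact ⟨26, (wB [0,0,0,1]).symm⟩
  · exact ⟨25, (wB [0,0,1,0]).symm.trans E16b⟩
  · exact ⟨27, (wB [0,0,1,1]).symm⟩
  · exact ⟨7, (wB [0,1,0,0]).symm.trans E18b⟩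
  · exact ⟨23, (wB [0,1,1,1]).symm.trans E19b⟩
  · exact ⟨30, (wB [1,0,0,0]).symm⟩
  · exact ⟨11, (wB [1,1,0,0]).symm.trans E21b⟩
  · exact ⟨28, (wB [1,1,1,0]).symm.trans E22b⟩
  · exact ⟨34, (wB [0,0,0,0,0]).symm⟩
  · exact ⟨36, (wB [0,0,0,0,1]).symm⟩
  · exact ⟨35, (wB [0,0,0,1,0]).symm.trans E25b⟩
  · exact ⟨37, (wB [0,0,0,1,1]).symm⟩
  · exact ⟨33, (wB [0,0,1,1,1]).symm.trans E27b⟩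
  · exact ⟨20, (wB [0,1,0,0,0]).symm.trans E28b⟩
  · exact ⟨22, (wB [0,1,1,1,0]).symm.trans E29b⟩
  · exact ⟨40, (wB [1,0,0,0,1]).symm⟩
  · exact ⟨41, (wB [1,1,0,0,0]).symm⟩
  · exact ⟨21, (wB [1,1,1,0,0]).symm.trans E32b⟩
  · exact ⟨32, (wB [0,0,0,0,0,0]).symm.trans E33b⟩
  · exact ⟨31, (wB [0,0,0,0,0,1]).symm.trans E34b⟩
  · exact ⟨44, (wB [0,0,0,0,1,0]).symm.trans E35b⟩
  · exact ⟨45, (wB [0,0,0,0,1,1]).symm⟩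
  · exact ⟨43, (wB [0,0,0,1,1,1]).symm.trans E37b⟩
  · exact ⟨29, (wB [0,0,1,1,1,0]).symm.trans E38b⟩
  · exact ⟨12, (wB [0,1,1,1,0,0]).symm.trans E39b⟩
  · exact ⟨46, (wB [1,0,0,0,1,1]).symm.trans E40b⟩
  · exact ⟨1, (wB [1,1,0,0,0,1]).symm.trans E41b⟩
  · exact ⟨47, (wB [1,1,1,0,0,0]).symm.trans E42b⟩
  · exact ⟨39, (wB [0,0,0,0,0,0,0]).symm.trans E43b⟩
  · exact ⟨42, (wB [0,0,0,0,0,1,0]).symm.trans E44b⟩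
  · exact ⟨0, (wB [0,0,0,0,1,1,1]).symm.trans E45b⟩
  · exact ⟨38, (wB [0,0,0,1,1,1,0]).symm.trans E46b⟩
  · exact ⟨5, (wB [0,1,1,1,0,0,0]).symm.trans E47b⟩



abbrev Q7 := Quaternion (ZMod 7)

instance : DecidableEq Q7 := fun x y =>
  decidable_of_iff (x.re = y.re ∧ x.imI = y.imI ∧ x.imJ = y.imJ ∧ x.imK = y.imK)
    ⟨fun ⟨e1', e2', e3', e4'⟩ => QuaternionAlgebra.ext e1' e2' e3' e4',
     fun h => by subst h; exact ⟨rfl, rfl, rfl, rfl⟩⟩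

def AU : Q7ˣ := ⟨⟨5,5,0,0⟩, ⟨5,2,0,0⟩, by decide, by decide⟩
def BU : Q7ˣ := ⟨⟨5,0,5,0⟩, ⟨5,0,2,0⟩, by decide, by decide⟩

def fK : Fin 2 → Q7ˣ
  | 0 => AU
  | 1 => BU

def qtabN : Nat → Q7
  | 0 => ⟨1,0,0,0⟩
  | 1 => ⟨5,5,0,0⟩
  | 2 => ⟨5,0,5,0⟩
  | 3 => ⟨0,1,0,0⟩
  | 4 => ⟨4,4,4,4⟩
  | 5 => ⟨4,4,4,3⟩
  | 6 => ⟨0,0,1,0⟩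
  | 7 => ⟨2,5,0,0⟩
  | 8 => ⟨0,5,0,5⟩
  | 9 => ⟨0,5,5,0⟩
  | 10 => ⟨0,0,5,5⟩
  | 11 => ⟨0,5,0,2⟩
  | 12 => ⟨0,0,5,2⟩
  | 13 => ⟨2,0,5,0⟩
  | 14 => ⟨6,0,0,0⟩
  | 15 => ⟨3,4,3,4⟩
  | 16 => ⟨3,4,4,4⟩
  | 17 => ⟨0,0,0,1⟩
  | 18 => ⟨3,4,4,3⟩
  | 19 => ⟨3,3,4,4⟩
  | 20 => ⟨3,4,3,3⟩
  | 21 => ⟨0,0,0,6⟩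
  | 22 => ⟨3,3,4,3⟩
  | 23 => ⟨2,2,0,0⟩
  | 24 => ⟨2,0,2,0⟩
  | 25 => ⟨2,0,0,5⟩
  | 26 => ⟨0,0,2,5⟩
  | 27 => ⟨0,2,0,5⟩
  | 28 => ⟨2,0,0,2⟩
  | 29 => ⟨0,2,5,0⟩
  | 30 => ⟨0,5,2,0⟩
  | 31 => ⟨0,0,2,2⟩
  | 32 => ⟨0,2,0,2⟩
  | 33 => ⟨0,6,0,0⟩
  | 34 => ⟨3,3,3,3⟩
  | 35 => ⟨3,3,3,4⟩
  | 36 => ⟨0,0,6,0⟩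
  | 37 => ⟨4,3,3,4⟩
  | 38 => ⟨4,3,4,4⟩
  | 39 => ⟨4,3,4,3⟩
  | 40 => ⟨4,4,3,4⟩
  | 41 => ⟨4,4,3,3⟩
  | 42 => ⟨4,3,3,3⟩
  | 43 => ⟨5,2,0,0⟩
  | 44 => ⟨0,2,2,0⟩
  | 45 => ⟨5,0,2,0⟩
  | 46 => ⟨5,0,0,5⟩
  | 47 => ⟨5,0,0,2⟩
  | _ => 0

lemma hrels : ∀ r ∈ binaryOctahedralRels, FreeGroup.lift fK r = 1 := by
  intro r hr
  rcases hr with rfl | hr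
  · simp only [map_mul, map_inv, FreeGroup.lift_apply_of]
    rw [mul_inv_eq_one]
    exact Units.ext (by decide)
  · rw [Set.mem_singleton_iff] at hr
    subst hr
    simp only [map_mul, map_inv, map_pow, FreeGroup.lift_apply_of, pow_two]
    rw [mul_inv_eq_one]
    exact Units.ext (by decide)

def φ : G →* Q7ˣ := PresentedGroup.toGroup hrels

lemma φa : φ a = AU := by rw [adef]; exact PresentedGroup.toGroup.of hrels
lemma φb : φ b = BU := by rw [bdef]; exact PresentedGroup.toGroup.of hrels

lemma hfk : ∀ x : Fin 2, φ (f x) = fK x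
  | 0 => by rw [f0]; exact φa
  | 1 => by rw [f1]; exact φb

def wK (l : List (Fin 2)) : Q7ˣ := (l.map fK).prod

lemma hφw : ∀ l : List (Fin 2), φ (w l) = wK l := by
  intro l
  induction l with
  | nil => rw [wnil, wK]; simp
  | cons x xs ih =>
    rw [wcons, map_mul, hfk, ih, wK, wK]
    simp

lemma hq : ∀ i : Fin 48, (wK (wordsN i.val)).val = qtabN i.val := by decide

lemma qinj : ∀ i j : Fin 48, qtabN i.val = qtabN j.val → i = j := by decide

lemma Sinj : Function.Injective S := by
  intro i j h
  have t : wK (wordsN i.val) = wK (wordsN j.val) :=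
    (hφw _).symm.trans ((congrArg φ h).trans (hφw _))
  exact qinj i j ((hq i).symm.trans ((congrArg Units.val t).trans (hq j)))

lemma Ssurj : Function.Surjective S := by
  have main : ∀ g : G, ∀ i : Fin 48, ∃ j, S i * g = S j := by
    intro g
    have hg : g ∈ Subgroup.closure
        (Set.range (PresentedGroup.of : Fin 2 → PresentedGroup binaryOctahedralRels)) := by
      rw [PresentedGroup.closure_range_of]
      exact Subgroup.mem_top g
    refine Subgroup.closure_induction
      (p := fun g _ => ∀ i : Fin 48, ∃ j : Fin 48, S i * g = S j) ?_ ?_ ?_ ?_ hg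
    · rintro x ⟨t, rfl⟩
      fin_cases t
      · exact ta
      · exact tb
    · intro i; exact ⟨i, mul_one _⟩
    · intro x y _ _ hx hy i
      obtain ⟨j, hj⟩ := hx i
      obtain ⟨k, hk⟩ := hy j
      exact ⟨k, by rw [← mul_assoc, hj, hk]⟩
    · intro x _ hx
      choose F hF using hx
      have Finj : Function.Injective F := by
        intro i j hij
        apply Sinj
        apply mul_right_cancel (b := x)
        rw [hF i, hF j, hij]
      have Fsurj : Function.Surjective F := Finite.surjective_of_injective Finj
      intro i
      obtain ⟨i', hi'⟩ := Fsurj i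
      refine ⟨i', ?_⟩
      rw [← hi', ← hF i']
      group
  intro g
  obtain ⟨j, hj⟩ := main g 0
  refine ⟨j, ?_⟩
  rw [← hj, show S 0 = (1 : G) from wnil, one_mul]


end BOhelp


theorem stmt_4 : Nat.card (PresentedGroup binaryOctahedralRels) = 48 := by
  have h := Nat.card_eq_of_bijective BOhelp.S ⟨BOhelp.Sinj, BOhelp.Ssurj⟩
  simpa using h.symm
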